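/- arXiv:2601.11209 — 2 statements merged into one kernel-verified Lean document; each statement's English description precedes it below -/
import Mathlib

section
/- Let Y be an integrable random variable with Y > 0 almost surely and E[Y] = 1. Let 0 < K¹ < ⋯ < Kᴺ be real numbers and q ∈ ℝᴺ with qⁱ ≥ 0, Σ_{i=1}^{N} qⁱ = 1, and Σ_{i=1}^{N} qⁱ·Kⁱ = 1. Define Ĉ(K) := Σ_{i=1}^{N} qⁱ·E[(Kⁱ·Y − K)⁺] for K ≥ 0. Then: (1) Ĉ(0) = 1; (2) Ĉ is convex and nonincreasing; (3) lim_{K→∞} Ĉ(K) = 0; (4) the right derivative of Ĉ at 0 equals −1; and (5) Ĉ(K) ≥ (1 − K)⁺ for all K ≥ 0. -/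
/-!
Each summand of `Ĉ` is a call price `k ↦ E[(Kⁱ Y - k)⁺]`. As an integral of convex nonincreasing
functions of `k` it is convex and nonincreasing; by dominated convergence it vanishes at infinity
and, since `Kⁱ Y > 0`, has right slope `-1` at `0`; and it dominates `E[Kⁱ Y] - k = Kⁱ - k`.
The constraints `∑ qⁱ = 1` and `∑ qⁱ Kⁱ = 1` turn these into the five claims.
-/

open MeasureTheory Filter Set Finset Topology

theorem ConvexOn.finset_sum {𝕜 E β ι : Type*} [Semiring 𝕜] [PartialOrder 𝕜] [AddCommMonoid E]
    [AddCommMonoid β] [PartialOrder β] [IsOrderedAddMonoid β] [SMul 𝕜 E] [Module 𝕜 β]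
    {s : Set E} {t : Finset ι} {f : ι → E → β} (hs : Convex 𝕜 s)
    (hf : ∀ i ∈ t, ConvexOn 𝕜 s (f i)) : ConvexOn 𝕜 s fun x => ∑ i ∈ t, f i x := by
  classical
  induction t using Finset.induction_on with
  | empty => simpa using convexOn_const 0 hs
  | insert i t hi ih =>
    simp_rw [sum_insert hi]
    exact (hf i (mem_insert_self i t)).add (ih fun j hj => hf j (mem_insert_of_mem hj))

theorem lt_apply_of_lt_apply_one {α : Type*} [Preorder α] {a : ℕ → α} {b : α} {N : ℕ}
    (h₁ : b < a 1) (h : ∀ i, 1 ≤ i → i < N → a i < a (i + 1)) : ∀ i ∈ Finset.Icc 1 N, b < a i := by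
  intro i hi
  obtain ⟨hi₁, hiN⟩ := Finset.mem_Icc.mp hi
  clear hi
  induction i, hi₁ using Nat.le_induction with
  | base => exact h₁
  | succ n hn ih => exact (ih (by omega)).trans (h n hn hiN)

noncomputable def callPrice {Ω : Type*} {m0 : MeasurableSpace Ω} (P : Measure Ω) (X : Ω → ℝ)
    (k : ℝ) : ℝ :=
  ∫ ω, max (X ω - k) 0 ∂P

section callPrice

variable {Ω : Type*} {m0 : MeasurableSpace Ω} {P : Measure Ω} {X : Ω → ℝ}

theorem callPrice_nonneg (k : ℝ) : 0 ≤ callPrice P X k :=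
  integral_nonneg fun _ => le_max_right _ _

theorem callPrice_zero_of_nonneg (hX : 0 ≤ᵐ[P] X) : callPrice P X 0 = ∫ ω, X ω ∂P := by
  refine integral_congr_ae ?_
  filter_upwards [hX] with ω hω
  simpa using hω

variable [IsFiniteMeasure P]

theorem integrable_posPart_sub (hX : Integrable X P) (k : ℝ) :
    Integrable (fun ω => max (X ω - k) 0) P :=
  (hX.sub (integrable_const k)).pos_part

theorem antitone_callPrice (hX : Integrable X P) : Antitone (callPrice P X) := fun _ _ hkl =>
  integral_mono (integrable_posPart_sub hX _) (integrable_posPart_sub hX _) fun _ =>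
    max_le_max (by linarith) le_rfl

theorem convexOn_callPrice (hX : Integrable X P) : ConvexOn ℝ univ (callPrice P X) := by
  refine ⟨convex_univ, fun k _ l _ a b ha hb hab => ?_⟩
  have hpayoff (x : ℝ) : ConvexOn ℝ univ fun k : ℝ => max (x - k) 0 :=
    ((convexOn_const x convex_univ).sub (concaveOn_id convex_univ)).sup
      (convexOn_const 0 convex_univ)
  have hk := (integrable_posPart_sub hX k).const_mul a
  have hl := (integrable_posPart_sub hX l).const_mul b
  simp only [callPrice, smul_eq_mul, ← integral_const_mul, ← integral_add hk hl]
  exact integral_mono (integrable_posPart_sub hX _) (hk.add hl) fun ω =>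
    (hpayoff (X ω)).2 trivial trivial ha hb hab

theorem tendsto_callPrice_atTop (hX : Integrable X P) : Tendsto (callPrice P X) atTop (𝓝 0) := by
  have hdom := tendsto_integral_filter_of_dominated_convergence (μ := P) (l := atTop)
    (F := fun k ω => max (X ω - k) 0) (f := fun _ => 0) (fun ω => |X ω|)
    (Eventually.of_forall fun k => (integrable_posPart_sub hX k).aestronglyMeasurable)
    ?_ hX.abs ?_
  · rwa [integral_zero] at hdom
  · filter_upwards [eventually_ge_atTop 0] with k hk
    refine Eventually.of_forall fun ω => ?_
    rw [Real.norm_of_nonneg (le_max_right _ _)]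
    exact max_le ((sub_le_self _ hk).trans (le_abs_self _)) (abs_nonneg _)
  · refine Eventually.of_forall fun ω => tendsto_const_nhds.congr' ?_
    filter_upwards [eventually_ge_atTop (X ω)] with k hk
    rw [max_eq_right (by linarith)]

theorem integral_sub_le_callPrice [IsProbabilityMeasure P] (hX : Integrable X P) (k : ℝ) :
    (∫ ω, X ω ∂P) - k ≤ callPrice P X k := by
  calc (∫ ω, X ω ∂P) - k = ∫ ω, (X ω - k) ∂P := by
        rw [integral_sub hX (integrable_const k), integral_const, probReal_univ, one_smul]
    _ ≤ callPrice P X k :=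
        integral_mono (hX.sub (integrable_const k)) (integrable_posPart_sub hX k) fun _ =>
          le_max_left _ _

theorem tendsto_callPrice_slope_zero [IsProbabilityMeasure P] (hX : Integrable X P)
    (hpos : ∀ᵐ ω ∂P, 0 < X ω) :
    Tendsto (fun ε => (callPrice P X ε - callPrice P X 0) / ε) (𝓝[>] 0) (𝓝 (-1)) := by
  -- The integrand `((X - ε)⁺ - X) / ε = -min X ε / ε` lies in `[-1, 0]` and tends to `-1`.
  have hdom := tendsto_integral_filter_of_dominated_convergence (μ := P) (l := 𝓝[>] 0)
    (F := fun ε ω => (max (X ω - ε) 0 - X ω) / ε) (f := fun _ => -1) (fun _ => 1)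
    (Eventually.of_forall fun ε =>
      (((integrable_posPart_sub hX ε).sub hX).div_const ε).aestronglyMeasurable)
    ?_ (integrable_const 1) ?_
  · rw [callPrice_zero_of_nonneg (hpos.mono fun _ h => h.le)]
    refine (hdom.congr fun ε => ?_).trans (by simp)
    rw [integral_div, integral_sub (integrable_posPart_sub hX ε) hX]
    rfl
  · filter_upwards [self_mem_nhdsWithin] with ε (hε : 0 < ε)
    filter_upwards [hpos] with ω hω
    rw [Real.norm_eq_abs, abs_div, abs_of_pos hε, div_le_one hε]
    rcases le_total (X ω - ε) 0 with h | h
    · rw [max_eq_right h, abs_of_nonpos (by linarith)]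
      linarith
    · rw [max_eq_left h, abs_of_nonpos (by linarith)]
      linarith
  · filter_upwards [hpos] with ω hω
    refine tendsto_const_nhds.congr' ?_
    filter_upwards [Ioo_mem_nhdsGT hω] with ε hε
    rw [max_eq_left (by linarith [hε.2]), sub_sub_cancel_left, neg_div, div_self hε.1.ne']

end callPrice

/-- properties of `Ĉ(K) = Σ_{i=1}^N qⁱ E[(Kⁱ·Y - K)⁺]` where `Y > 0`
a.s. is integrable with `E[Y] = 1` and `q` is a density with unit mean on the
strikes `0 < K¹ < ⋯ < Kᴺ`. -/
theorem stmt_10 {Ω : Type*} {m0 : MeasurableSpace Ω} {P : Measure Ω} [IsProbabilityMeasure P]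
    (Y : Ω → ℝ) (hYint : Integrable Y P) (hYpos : ∀ᵐ ω ∂P, 0 < Y ω)
    (hYmean : ∫ ω, Y ω ∂P = 1)
    {N : ℕ} (K : ℕ → ℝ) (q : ℕ → ℝ)
    (hKpos : 0 < K 1) (hKmono : ∀ i, 1 ≤ i → i < N → K i < K (i + 1))
    (hq : ∀ i, 1 ≤ i → i ≤ N → 0 ≤ q i)
    (hq1 : ∑ i ∈ Finset.Icc 1 N, q i = 1)
    (hqK : ∑ i ∈ Finset.Icc 1 N, q i * K i = 1)
    (Chat : ℝ → ℝ)
    (hChat : ∀ x, 0 ≤ x →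
      Chat x = ∑ i ∈ Finset.Icc 1 N, q i * ∫ ω, max (K i * Y ω - x) 0 ∂P) :
    Chat 0 = 1 ∧
    (ConvexOn ℝ (Ici 0) Chat ∧ AntitoneOn Chat (Ici 0)) ∧
    Tendsto Chat atTop (nhds 0) ∧
    Tendsto (fun ε => (Chat (0 + ε) - Chat 0) / ε) (nhdsWithin 0 (Ioi 0)) (nhds (-1)) ∧
    (∀ x, 0 ≤ x → Chat x ≥ max (1 - x) 0) := by
  have hC : ∀ x, 0 ≤ x → Chat x = ∑ i ∈ Finset.Icc 1 N, q i * callPrice P (K i * Y ·) x := hChat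
  have hKY (i : ℕ) : Integrable (K i * Y ·) P := hYint.const_mul (K i)
  have hmean (i : ℕ) : ∫ ω, K i * Y ω ∂P = K i := by rw [integral_const_mul, hYmean, mul_one]
  have hq' (i) (hi : i ∈ Finset.Icc 1 N) : 0 ≤ q i := hq i (mem_Icc.1 hi).1 (mem_Icc.1 hi).2
  have hKYpos (i) (hi : i ∈ Finset.Icc 1 N) : ∀ᵐ ω ∂P, 0 < K i * Y ω :=
    hYpos.mono fun _ => mul_pos (lt_apply_of_lt_apply_one hKpos hKmono i hi)
  have hChat0 : Chat 0 = 1 := by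
    rw [hC 0 le_rfl, ← hqK]
    refine sum_congr rfl fun i hi => ?_
    rw [callPrice_zero_of_nonneg ((hKYpos i hi).mono fun _ h => h.le), hmean]
  refine ⟨hChat0, ⟨?_, ?_⟩, ?_, ?_, ?_⟩
  · refine (ConvexOn.finset_sum (convex_Ici 0) fun i hi => ?_).congr fun x hx => (hC x hx).symm
    exact ((convexOn_callPrice (hKY i)).subset (subset_univ _) (convex_Ici 0)).smul (hq' i hi)
  · intro x hx y hy hxy
    rw [hC x hx, hC y hy]
    exact sum_le_sum fun i hi =>
      mul_le_mul_of_nonneg_left (antitone_callPrice (hKY i) hxy) (hq' i hi)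
  · have hsum := tendsto_finsetSum (Finset.Icc 1 N) fun i _ =>
      (tendsto_callPrice_atTop (hKY i)).const_mul (q i)
    simp only [mul_zero, sum_const_zero] at hsum
    exact hsum.congr' ((eventually_ge_atTop 0).mono fun x hx => (hC x hx).symm)
  · have hsum := tendsto_finsetSum (Finset.Icc 1 N) fun i hi =>
      (tendsto_callPrice_slope_zero (hKY i) (hKYpos i hi)).const_mul (q i)
    simp only [mul_neg_one, sum_neg_distrib, hq1] at hsum
    refine hsum.congr' (eventually_mem_nhdsWithin.mono fun ε (hε : 0 < ε) => ?_)
    dsimp only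
    rw [zero_add, hC ε hε.le, hC 0 le_rfl, ← sum_sub_distrib, sum_div]
    exact sum_congr rfl fun i _ => by ring
  · intro x hx
    rw [hC x hx]
    refine max_le ?_ (sum_nonneg fun i hi => mul_nonneg (hq' i hi) (callPrice_nonneg x))
    calc 1 - x = ∑ i ∈ Finset.Icc 1 N, q i * (K i - x) := by
          simp only [mul_sub, sum_sub_distrib, hqK, ← sum_mul, hq1, one_mul]
      _ ≤ _ := sum_le_sum fun i hi => mul_le_mul_of_nonneg_left
          (by simpa only [hmean] using integral_sub_le_callPrice (hKY i) x) (hq' i hi)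
end

section
/- Let 0 < K¹ < ⋯ < Kᴺ be real numbers, let p ∈ ℝᴺ with pⁱ ≥ 0, Σ_{i=1}^{N} pⁱ = 1, Σ_{i=1}^{N} pⁱ·Kⁱ = 1, and let T > 0. For σ > 0 define Ĉ^{(σ)}(K) := Σ_{i=1}^{N} pⁱ·Call(Kⁱ, K, σ²·T) and C̄(K) := Σ_{i=1}^{N} pⁱ·(Kⁱ − K)⁺. Then: (1) for every σ > 0 and K ≥ 0, Ĉ^{(σ)}(K) ≥ C̄(K); (2) for fixed K > 0, σ ↦ Ĉ^{(σ)}(K) is nondecreasing; and (3) Ĉ^{(σ)} converges to C̄ uniformly on [0,∞) as σ → 0⁺, i.e., for every ε > 0 there exists σ₀ > 0 such that sup_{K ≥ 0} |Ĉ^{(σ)}(K) − C̄(K)| < ε for all σ ∈ (0, σ₀]. -/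
open MeasureTheory ProbabilityTheory Real Filter Set Finset

/-- The standard normal CDF: the CDF of the Gaussian measure with mean 0 and variance 1. -/
noncomputable def stdNormalCDF (x : ℝ) : ℝ := ((gaussianReal 0 1) (Set.Iic x)).toReal

/-- The Black–Scholes call price `Call(s,k,v) = s·Φ(d₊) - k·Φ(d₋)`, with the
convention `Call(s,0,v) = s`. -/
noncomputable def Call (s k v : ℝ) : ℝ :=
  if k = 0 then s
  else s * stdNormalCDF ((Real.log (s / k) + v / 2) / Real.sqrt v)
       - k * stdNormalCDF ((Real.log (s / k) - v / 2) / Real.sqrt v)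

/-!
For `k, v > 0` and `b = √v`, the Black–Scholes price is the maximum over `d` of
`s Φ(d) - k Φ(d - b)`, attained at `d₊`: the derivative `s φ(d) - k φ(d - b)` changes sign only
there, because `φ(d - b) / φ(d) = exp (d b - b² / 2)` is increasing in `d`. Letting `d → ∓∞`
gives `Call ≥ 0` and `Call ≥ s - k`. The objective increases pointwise with `b`, hence so does
its maximum. Finally `Call - (s - k)⁺ ≤ s (Φ(d₊) - Φ(d₋)) ≤ s b / √(2π)` since `φ ≤ 1 / √(2π)`,
and averaging against the weights `pⁱ` with `∑ pⁱ Kⁱ = 1` bounds `Ĉ^{(σ)} - C̄` by `σ √T / √(2π)`.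
-/

open scoped Topology

lemma stdNormalCDF_eq_cdf : stdNormalCDF = cdf (gaussianReal 0 1) := by
  ext x
  rw [cdf_eq_real]
  rfl

lemma stdNormalCDF_nonneg (x : ℝ) : 0 ≤ stdNormalCDF x := ENNReal.toReal_nonneg

lemma stdNormalCDF_le_one (x : ℝ) : stdNormalCDF x ≤ 1 := by
  rw [stdNormalCDF_eq_cdf]; exact cdf_le_one _ x

lemma monotone_stdNormalCDF : Monotone stdNormalCDF := by
  rw [stdNormalCDF_eq_cdf]; exact monotone_cdf _

lemma tendsto_stdNormalCDF_atBot : Tendsto stdNormalCDF atBot (𝓝 0) := by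
  rw [stdNormalCDF_eq_cdf]; exact tendsto_cdf_atBot _

lemma tendsto_stdNormalCDF_atTop : Tendsto stdNormalCDF atTop (𝓝 1) := by
  rw [stdNormalCDF_eq_cdf]; exact tendsto_cdf_atTop _

lemma gaussianPDFReal_zero_one (t : ℝ) :
    gaussianPDFReal 0 1 t = (√(2 * π))⁻¹ * exp (-t ^ 2 / 2) := by
  simp [gaussianPDFReal]

lemma continuous_gaussianPDFReal_zero_one : Continuous (gaussianPDFReal 0 1) := by
  simp only [funext gaussianPDFReal_zero_one]; fun_prop

lemma gaussianPDFReal_zero_one_le (t : ℝ) : gaussianPDFReal 0 1 t ≤ (√(2 * π))⁻¹ := by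
  rw [gaussianPDFReal_zero_one]
  exact mul_le_of_le_one_right (by positivity) (exp_le_one_iff.2 (by nlinarith [sq_nonneg t]))

lemma gaussianPDFReal_zero_one_sub (t b : ℝ) :
    gaussianPDFReal 0 1 (t - b) = exp (t * b - b ^ 2 / 2) * gaussianPDFReal 0 1 t := by
  rw [gaussianPDFReal_zero_one, gaussianPDFReal_zero_one, mul_left_comm, ← exp_add]
  ring_nf

lemma stdNormalCDF_sub_stdNormalCDF (a b : ℝ) :
    stdNormalCDF b - stdNormalCDF a = ∫ t in a..b, gaussianPDFReal 0 1 t := by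
  have h : ∀ x, stdNormalCDF x = ∫ t in Iic x, gaussianPDFReal 0 1 t := fun x => by
    rw [stdNormalCDF, gaussianReal_apply_eq_integral 0 one_ne_zero, ENNReal.toReal_ofReal
      (setIntegral_nonneg measurableSet_Iic fun t _ => gaussianPDFReal_nonneg 0 1 t)]
  rw [h, h, intervalIntegral.integral_Iic_sub_Iic (integrable_gaussianPDFReal 0 1).integrableOn
    (integrable_gaussianPDFReal 0 1).integrableOn]

lemma hasDerivAt_stdNormalCDF (x : ℝ) : HasDerivAt stdNormalCDF (gaussianPDFReal 0 1 x) x := by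
  have h : stdNormalCDF = fun u => stdNormalCDF 0 + ∫ t in (0 : ℝ)..u, gaussianPDFReal 0 1 t :=
    funext fun u => by rw [← stdNormalCDF_sub_stdNormalCDF]; ring
  rw [h]
  exact (intervalIntegral.integral_hasDerivAt_right
    (integrable_gaussianPDFReal 0 1).intervalIntegrable
    continuous_gaussianPDFReal_zero_one.stronglyMeasurable.stronglyMeasurableAtFilter
    continuous_gaussianPDFReal_zero_one.continuousAt).const_add _

lemma stdNormalCDF_sub_le {a b : ℝ} (hab : a ≤ b) :
    stdNormalCDF b - stdNormalCDF a ≤ (b - a) / √(2 * π) := by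
  rw [div_eq_inv_mul]
  exact image_sub_le_mul_sub_of_deriv_le (fun x => (hasDerivAt_stdNormalCDF x).differentiableAt)
    (fun x => (hasDerivAt_stdNormalCDF x).deriv ▸ gaussianPDFReal_zero_one_le x) hab

section Call

variable {s k v : ℝ}

lemma Call_eq (hk : k ≠ 0) (hv : 0 < v) :
    Call s k v = s * stdNormalCDF ((log (s / k) + v / 2) / √v)
      - k * stdNormalCDF ((log (s / k) + v / 2) / √v - √v) := by
  have hb : 0 < √v := sqrt_pos.2 hv
  rw [Call, if_neg hk]
  congr 3
  field_simp
  linarith [sq_sqrt hv.le]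

lemma isMaxOn_mul_stdNormalCDF_sub_mul_stdNormalCDF {b : ℝ} (hs : 0 < s) (hk : 0 < k)
    (hb : 0 < b) :
    IsMaxOn (fun d => s * stdNormalCDF d - k * stdNormalCDF (d - b)) univ
      ((log (s / k) + b ^ 2 / 2) / b) := by
  set d₀ := (log (s / k) + b ^ 2 / 2) / b
  set h := fun d => s * stdNormalCDF d - k * stdNormalCDF (d - b)
  have hd₀ : d₀ * b = log (s / k) + b ^ 2 / 2 := div_mul_cancel₀ _ hb.ne'
  have hderiv : ∀ d, HasDerivAt h (s * gaussianPDFReal 0 1 d * (1 - exp ((d - d₀) * b))) d := by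
    intro d
    have hexp : k * exp (d * b - b ^ 2 / 2) = s * exp ((d - d₀) * b) := by
      rw [show d * b - b ^ 2 / 2 = (d - d₀) * b + log (s / k) by linear_combination hd₀,
        exp_add, exp_log (div_pos hs hk)]
      field_simp
    refine HasDerivAt.congr_deriv (((hasDerivAt_stdNormalCDF d).const_mul s).sub
      (((hasDerivAt_stdNormalCDF (d - b)).comp_sub_const d b).const_mul k)) ?_
    rw [gaussianPDFReal_zero_one_sub]
    linear_combination (-gaussianPDFReal 0 1 d) * hexp
  have hcont : ContinuousOn h univ := fun d _ => (hderiv d).continuousAt.continuousWithinAt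
  have hmono : MonotoneOn h (Iic d₀) :=
    monotoneOn_of_hasDerivWithinAt_nonneg (convex_Iic d₀) (hcont.mono (subset_univ _))
      (fun d _ => (hderiv d).hasDerivWithinAt) fun d hd => by
        rw [interior_Iic] at hd
        have : exp ((d - d₀) * b) ≤ 1 :=
          exp_le_one_iff.2 (mul_nonpos_of_nonpos_of_nonneg (sub_nonpos.2 (le_of_lt hd)) hb.le)
        exact mul_nonneg (mul_nonneg hs.le (gaussianPDFReal_nonneg 0 1 d)) (by linarith)
  have hanti : AntitoneOn h (Ici d₀) :=
    antitoneOn_of_hasDerivWithinAt_nonpos (convex_Ici d₀) (hcont.mono (subset_univ _))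
      (fun d _ => (hderiv d).hasDerivWithinAt) fun d hd => by
        rw [interior_Ici] at hd
        have : 1 ≤ exp ((d - d₀) * b) :=
          one_le_exp_iff.2 (mul_nonneg (sub_nonneg.2 (le_of_lt hd)) hb.le)
        exact mul_nonpos_of_nonneg_of_nonpos
          (mul_nonneg hs.le (gaussianPDFReal_nonneg 0 1 d)) (by linarith)
  intro d _
  rcases le_total d d₀ with hd | hd
  · exact hmono hd self_mem_Iic hd
  · exact hanti self_mem_Ici hd hd

lemma le_Call (hs : 0 < s) (hk : 0 < k) (hv : 0 < v) (d : ℝ) :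
    s * stdNormalCDF d - k * stdNormalCDF (d - √v) ≤ Call s k v := by
  have h := isMaxOn_mul_stdNormalCDF_sub_mul_stdNormalCDF hs hk (sqrt_pos.2 hv) (mem_univ d)
  rw [sq_sqrt hv.le] at h
  rw [Call_eq hk.ne' hv]
  exact h

lemma max_sub_le_Call (hs : 0 < s) (hk : 0 ≤ k) (hv : 0 < v) : max (s - k) 0 ≤ Call s k v := by
  rcases hk.eq_or_lt with rfl | hk
  · simp [Call, hs.le]
  have hbot : Tendsto (fun d => s * stdNormalCDF d - k * stdNormalCDF (d - √v)) atBot (𝓝 0) := by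
    have := (tendsto_stdNormalCDF_atBot.const_mul s).sub ((tendsto_stdNormalCDF_atBot.comp
      (tendsto_atBot_add_const_right _ (-√v) tendsto_id)).const_mul k)
    rw [mul_zero, mul_zero, sub_zero] at this
    exact this
  have htop : Tendsto (fun d => s * stdNormalCDF d - k * stdNormalCDF (d - √v)) atTop
      (𝓝 (s - k)) := by
    have := (tendsto_stdNormalCDF_atTop.const_mul s).sub ((tendsto_stdNormalCDF_atTop.comp
      (tendsto_atTop_add_const_right _ (-√v) tendsto_id)).const_mul k)
    rw [mul_one, mul_one] at this
    exact this
  exact max_le (le_of_tendsto' htop (le_Call hs hk hv)) (le_of_tendsto' hbot (le_Call hs hk hv))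

lemma Call_monotoneOn (hs : 0 < s) (hk : 0 < k) : MonotoneOn (Call s k) (Ioi 0) := by
  intro v hv w hw hvw
  rw [Call_eq hk.ne' hv]
  refine le_trans ?_ (le_Call hs hk hw ((log (s / k) + v / 2) / √v))
  gcongr
  exact monotone_stdNormalCDF (by gcongr)

lemma Call_sub_max_le (hs : 0 ≤ s) (hk : 0 ≤ k) (hv : 0 < v) :
    Call s k v - max (s - k) 0 ≤ s * √v / √(2 * π) := by
  rcases hk.eq_or_lt with rfl | hk
  · simp [Call, hs]
    positivity
  rw [Call_eq hk.ne' hv]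
  set d := (log (s / k) + v / 2) / √v
  have hlip := stdNormalCDF_sub_le (sub_le_self d (sqrt_nonneg v))
  rw [sub_sub_cancel] at hlip
  have h0 := stdNormalCDF_nonneg (d - √v)
  have h1 := stdNormalCDF_le_one (d - √v)
  have hlip' := mul_le_mul_of_nonneg_left hlip hs
  rw [← mul_div_assoc] at hlip'
  rcases le_total s k with hsk | hsk
  · rw [max_eq_right (by linarith)]
    nlinarith [mul_nonneg (sub_nonneg.2 hsk) h0]
  · rw [max_eq_left (by linarith)]
    nlinarith [mul_nonneg (sub_nonneg.2 hsk) (sub_nonneg.2 h1)]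

lemma sum_mul_Call_sub_sum_mul_max_le {ι : Type*} (S : Finset ι) {p K : ι → ℝ}
    (hp : ∀ i ∈ S, 0 ≤ p i) (hK : ∀ i ∈ S, 0 ≤ K i) (hk : 0 ≤ k) (hv : 0 < v) :
    ∑ i ∈ S, p i * Call (K i) k v - ∑ i ∈ S, p i * max (K i - k) 0
      ≤ (∑ i ∈ S, p i * K i) * (√v / √(2 * π)) := by
  rw [← sum_sub_distrib, sum_mul]
  refine sum_le_sum fun i hi => ?_
  rw [← mul_sub, mul_assoc, ← mul_div_assoc]
  exact mul_le_mul_of_nonneg_left (Call_sub_max_le (hK i hi) hk hv) (hp i hi)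

end Call

lemma pos_of_pos_of_lt_succ {N : ℕ} {K : ℕ → ℝ} (h1 : 0 < K 1)
    (hK : ∀ i, 1 ≤ i → i < N → K i < K (i + 1)) : ∀ i ∈ Finset.Icc 1 N, 0 < K i := by
  intro i hi
  obtain ⟨hi1, hiN⟩ := Finset.mem_Icc.1 hi
  induction i, hi1 using Nat.le_induction with
  | base => exact h1
  | succ i hi1 ih => exact (ih (Finset.mem_Icc.2 ⟨hi1, by omega⟩) (by omega)).trans (hK i hi1 hiN)

lemma one_lt_sqrt_two_mul_pi : 1 < √(2 * π) := by
  rw [lt_sqrt zero_le_one]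
  linarith [pi_gt_three]

theorem stmt_14_general {N : ℕ} (K : ℕ → ℝ) (p : ℕ → ℝ) (T : ℝ) (hT : 0 < T)
    (hKpos : 0 < K 1) (hKmono : ∀ i, 1 ≤ i → i < N → K i < K (i + 1))
    (hp : ∀ i, 1 ≤ i → i ≤ N → 0 ≤ p i)
    (hpK : ∑ i ∈ Finset.Icc 1 N, p i * K i = 1)
    (Chat : ℝ → ℝ → ℝ)
    (hChat : ∀ σ x, Chat σ x = ∑ i ∈ Finset.Icc 1 N, p i * Call (K i) x (σ ^ 2 * T))
    (Cbar : ℝ → ℝ)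
    (hCbar : ∀ x, Cbar x = ∑ i ∈ Finset.Icc 1 N, p i * max (K i - x) 0) :
    (∀ σ, 0 < σ → ∀ x, 0 ≤ x → Chat σ x ≥ Cbar x) ∧
    (∀ x, 0 < x → MonotoneOn (fun σ => Chat σ x) (Ioi 0)) ∧
    (∀ ε > (0 : ℝ), ∃ σ₀ > (0 : ℝ), ∀ σ, 0 < σ → σ ≤ σ₀ →
      ∀ x, 0 ≤ x → |Chat σ x - Cbar x| < ε) := by
  have hK := pos_of_pos_of_lt_succ hKpos hKmono
  have hp' : ∀ i ∈ Finset.Icc 1 N, 0 ≤ p i := fun i hi =>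
    hp i (Finset.mem_Icc.1 hi).1 (Finset.mem_Icc.1 hi).2
  have hv : ∀ σ : ℝ, 0 < σ → 0 < σ ^ 2 * T := fun σ hσ => by positivity
  have lower : ∀ σ, 0 < σ → ∀ x, 0 ≤ x → Chat σ x ≥ Cbar x := fun σ hσ x hx => by
    rw [hChat, hCbar]
    exact sum_le_sum fun i hi =>
      mul_le_mul_of_nonneg_left (max_sub_le_Call (hK i hi) hx (hv σ hσ)) (hp' i hi)
  have upper : ∀ σ, 0 < σ → ∀ x, 0 ≤ x → Chat σ x - Cbar x ≤ σ * √T / √(2 * π) := by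
    intro σ hσ x hx
    rw [hChat, hCbar]
    have h := sum_mul_Call_sub_sum_mul_max_le _ hp' (fun i hi => (hK i hi).le) hx (hv σ hσ)
    rwa [hpK, one_mul, sqrt_mul (sq_nonneg σ), sqrt_sq hσ.le] at h
  refine ⟨lower, fun x hx σ hσ τ hτ hστ => ?_, fun ε hε => ⟨ε / √T, by positivity, ?_⟩⟩
  · simp only [hChat]
    gcongr with i hi
    · exact hp' i hi
    · exact Call_monotoneOn (hK i hi) hx (hv σ hσ) (hv τ hτ) (by gcongr; exact hσ.out.le)
  · intro σ hσ hσε x hx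
    rw [abs_of_nonneg (sub_nonneg.2 (lower σ hσ x hx))]
    calc Chat σ x - Cbar x ≤ σ * √T / √(2 * π) := upper σ hσ x hx
      _ ≤ ε / √(2 * π) := by
        gcongr
        exact (le_div_iff₀ (sqrt_pos.2 hT)).1 hσε
      _ < ε := div_lt_self hε one_lt_sqrt_two_mul_pi

/-- the smooth surface `Ĉ^{(σ)}(K) = Σ pⁱ Call(Kⁱ, K, σ²T)` dominates
the linear interpolator `C̄(K) = Σ pⁱ (Kⁱ-K)⁺`, is nondecreasing in `σ`, and
converges uniformly to `C̄` as `σ → 0⁺`. -/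
theorem stmt_14 {N : ℕ} (K : ℕ → ℝ) (p : ℕ → ℝ) (T : ℝ) (hT : 0 < T)
    (hKpos : 0 < K 1) (hKmono : ∀ i, 1 ≤ i → i < N → K i < K (i + 1))
    (hp : ∀ i, 1 ≤ i → i ≤ N → 0 ≤ p i)
    (hp1 : ∑ i ∈ Finset.Icc 1 N, p i = 1)
    (hpK : ∑ i ∈ Finset.Icc 1 N, p i * K i = 1)
    (Chat : ℝ → ℝ → ℝ)
    (hChat : ∀ σ x, Chat σ x = ∑ i ∈ Finset.Icc 1 N, p i * Call (K i) x (σ ^ 2 * T))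
    (Cbar : ℝ → ℝ)
    (hCbar : ∀ x, Cbar x = ∑ i ∈ Finset.Icc 1 N, p i * max (K i - x) 0) :
    (∀ σ, 0 < σ → ∀ x, 0 ≤ x → Chat σ x ≥ Cbar x) ∧
    (∀ x, 0 < x → MonotoneOn (fun σ => Chat σ x) (Ioi 0)) ∧
    (∀ ε > (0 : ℝ), ∃ σ₀ > (0 : ℝ), ∀ σ, 0 < σ → σ ≤ σ₀ →
      ∀ x, 0 ≤ x → |Chat σ x - Cbar x| < ε) :=
  stmt_14_general K p T hT hKpos hKmono hp hpK Chat hChat Cbar hCbar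
end
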